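/- Let ρ be a state and σ a positive definite matrix on ℂ^d, and let 0 < δ < ε < 1. Then D_H^{ε−δ}(ρ‖σ) + log δ ≤ D̲_s^ε(ρ‖σ) ≤ D_H^ε(ρ‖σ). -/

import Mathlib

open Matrix
open scoped ComplexOrder

noncomputable section

/-- Positive part `C₊` of a Hermitian matrix, obtained by applying `x ↦ max x 0` to the
eigenvalues in a spectral decomposition (junk value `0` for non-Hermitian input). -/
def matPos {n : Type*} [Fintype n] [DecidableEq n] (A : Matrix n n ℂ) : Matrix n n ℂ :=
  if hA : A.IsHermitian then
    (hA.eigenvectorUnitary : Matrix n n ℂ) *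
      Matrix.diagonal (fun i => ((max (hA.eigenvalues i) 0 : ℝ) : ℂ)) *
      star (hA.eigenvectorUnitary : Matrix n n ℂ)
  else 0

/-- `Tr C₊` as a real number. -/
def trPos {n : Type*} [Fintype n] [DecidableEq n] (A : Matrix n n ℂ) : ℝ :=
  (matPos A).trace.re

/-- Spectral projection of a Hermitian matrix onto `[0, ∞)` (junk value `0` for
non-Hermitian input). -/
def projNonneg {n : Type*} [Fintype n] [DecidableEq n] (A : Matrix n n ℂ) : Matrix n n ℂ :=
  if hA : A.IsHermitian then
    (hA.eigenvectorUnitary : Matrix n n ℂ) *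
      Matrix.diagonal (fun i => if 0 ≤ hA.eigenvalues i then (1 : ℂ) else 0) *
      star (hA.eigenvectorUnitary : Matrix n n ℂ)
  else 0

/-- The information spectrum relative entropy `D̲_s^ε(ρ‖σ)`. -/
def Dlow {n : Type*} [Fintype n] [DecidableEq n] (ε : ℝ) (ρ σ : Matrix n n ℂ) : ℝ :=
  sSup {γ : ℝ | 1 - ε ≤ trPos (ρ - (2 : ℝ) ^ γ • σ)}

/-- The information spectrum relative entropy `D̄_s^ε(ρ‖σ)`. -/
def Dhigh {n : Type*} [Fintype n] [DecidableEq n] (ε : ℝ) (ρ σ : Matrix n n ℂ) : ℝ :=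
  sInf {γ : ℝ | trPos (ρ - (2 : ℝ) ^ γ • σ) ≤ ε}

/-- The hypothesis testing relative entropy
`D_H^ε(ρ‖σ) = −log inf{Tr(Qσ) : 0 ≤ Q ≤ 1, Tr(Qρ) ≥ 1 − ε}` (logarithm to base 2). -/
def DH {n : Type*} [Fintype n] [DecidableEq n] (ε : ℝ) (ρ σ : Matrix n n ℂ) : ℝ :=
  - Real.logb 2 (sInf {r : ℝ | ∃ Q : Matrix n n ℂ, Q.PosSemidef ∧
      ((1 : Matrix n n ℂ) - Q).PosSemidef ∧ 1 - ε ≤ (Q * ρ).trace.re ∧ r = (Q * σ).trace.re})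

/-! Write `A_γ = ρ - 2^γ σ` and `P_γ` for the spectral projection of `A_γ` onto `[0, ∞)`.
Every test `0 ≤ Q ≤ 1` has `Tr(Q A_γ) ≤ Tr (A_γ)₊`, with equality at `Q = P_γ` since
`P_γ A_γ = (A_γ)₊`. If `Tr (A_γ)₊ ≥ 1 - ε`, then `P_γ` is a test of level `ε` with
`2^γ Tr(P_γ σ) ≤ ε`, whence `D_H^ε ≥ γ`. If `Tr (A_γ)₊ < 1 - ε`, every test of level `ε - δ`
has `2^γ Tr(Q σ) > δ`, whence `D_H^{ε-δ} ≤ γ - log δ`. Positive definiteness of `σ` gives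
`m ρ ≤ σ` for some `m > 0`, which keeps the infimum in `D_H` positive and bounds the admissible
`γ` from above. -/

open scoped MatrixOrder

namespace Matrix

lemma IsHermitian.sub_real_smul {n : Type*} {A B : Matrix n n ℂ} (hA : A.IsHermitian)
    (hB : B.IsHermitian) (t : ℝ) : (A - t • B).IsHermitian :=
  hA.sub ((IsSelfAdjoint.all t).smul hB)

variable {n : Type*} [Fintype n] [DecidableEq n]

lemma re_trace_mul_nonneg {Q B : Matrix n n ℂ} (hQ : 0 ≤ Q) (hB : 0 ≤ B) :
    0 ≤ (Q * B).trace.re := by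
  obtain ⟨X, rfl⟩ := CStarAlgebra.nonneg_iff_eq_star_mul_self.mp hB
  have h : 0 ≤ (X * Q * Xᴴ).trace := (hQ.posSemidef.mul_mul_conjTranspose_same X).trace_nonneg
  rw [mul_assoc, trace_mul_comm, mul_assoc] at h
  exact (Complex.le_def.mp h).1

lemma re_trace_mul_le_mul_left {Q A B : Matrix n n ℂ} (hQ : 0 ≤ Q) (hAB : A ≤ B) :
    (Q * A).trace.re ≤ (Q * B).trace.re := by
  have h := re_trace_mul_nonneg hQ (sub_nonneg.mpr hAB)
  rwa [mul_sub, trace_sub, Complex.sub_re, sub_nonneg] at h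

lemma re_trace_mul_le_mul_right {Q Q' B : Matrix n n ℂ} (hB : 0 ≤ B) (hQQ' : Q ≤ Q') :
    (Q * B).trace.re ≤ (Q' * B).trace.re := by
  rw [trace_mul_comm Q, trace_mul_comm Q']
  exact re_trace_mul_le_mul_left hB hQQ'

lemma re_trace_mul_sub_smul (Q A B : Matrix n n ℂ) (t : ℝ) :
    (Q * (A - t • B)).trace.re = (Q * A).trace.re - t * (Q * B).trace.re := by
  simp [mul_sub, trace_sub]

lemma matPos_eq_posPart (A : Matrix n n ℂ) : matPos A = A⁺ := by
  unfold matPos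
  split_ifs with hA
  · rw [CFC.posPart_def, cfcₙ_eq_cfc, hA.cfc_eq]
    rfl
  · exact (CFC.posPart_eq_zero_of_not_isSelfAdjoint hA).symm

lemma projNonneg_eq_cfc {A : Matrix n n ℂ} (hA : A.IsHermitian) :
    projNonneg A = cfc (fun x : ℝ => if 0 ≤ x then (1 : ℝ) else 0) A := by
  rw [projNonneg, dif_pos hA, hA.cfc_eq, IsHermitian.cfc, Unitary.conjStarAlgAut_apply]
  congr 3
  ext i
  split_ifs <;> simp [*]

lemma projNonneg_nonneg (A : Matrix n n ℂ) : 0 ≤ projNonneg A := by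
  by_cases hA : A.IsHermitian
  · rw [projNonneg_eq_cfc hA]
    exact cfc_nonneg fun x _ => by split_ifs <;> norm_num
  · rw [projNonneg, dif_neg hA]

lemma projNonneg_le_one (A : Matrix n n ℂ) : projNonneg A ≤ 1 := by
  by_cases hA : A.IsHermitian
  · rw [projNonneg_eq_cfc hA]
    exact cfc_le_one _ _ fun x _ => by split_ifs <;> norm_num
  · rw [projNonneg, dif_neg hA]
    exact PosSemidef.one.nonneg

lemma projNonneg_mul_self (A : Matrix n n ℂ) : projNonneg A * A = A⁺ := by
  by_cases hA : A.IsHermitian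
  · have hcont (f : ℝ → ℝ) : ContinuousOn f (spectrum ℝ A) :=
      A.finite_real_spectrum.continuousOn f
    rw [projNonneg_eq_cfc hA]
    conv_lhs => arg 2; rw [← cfc_id' ℝ A hA.isSelfAdjoint]
    rw [← cfc_mul _ _ A (hcont _) (hcont _), CFC.posPart_def, cfcₙ_eq_cfc]
    refine cfc_congr fun x _ => ?_
    split_ifs with hx
    · simp [posPart_of_nonneg hx]
    · simp [posPart_of_nonpos (not_le.mp hx).le]
  · rw [projNonneg, dif_neg hA, zero_mul,
      CFC.posPart_eq_zero_of_not_isSelfAdjoint hA]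

lemma re_trace_mul_le_trPos {Q A : Matrix n n ℂ} (hQ₀ : 0 ≤ Q) (hQ₁ : Q ≤ 1)
    (hA : A.IsHermitian) : (Q * A).trace.re ≤ trPos A :=
  calc (Q * A).trace.re ≤ (Q * A⁺).trace.re :=
        re_trace_mul_le_mul_left hQ₀ (CFC.le_posPart hA.isSelfAdjoint)
    _ ≤ (1 * A⁺).trace.re := re_trace_mul_le_mul_right (CFC.posPart_nonneg A) hQ₁
    _ = trPos A := by rw [one_mul, trPos, matPos_eq_posPart]

lemma re_trace_le_trPos {A : Matrix n n ℂ} (hA : A.IsHermitian) : A.trace.re ≤ trPos A := by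
  simpa using re_trace_mul_le_trPos PosSemidef.one.nonneg le_rfl hA

lemma re_trace_projNonneg_mul (A : Matrix n n ℂ) :
    (projNonneg A * A).trace.re = trPos A := by
  rw [projNonneg_mul_self, trPos, matPos_eq_posPart]

lemma trPos_sub_smul (A B : Matrix n n ℂ) (t : ℝ) :
    trPos (A - t • B) = (projNonneg (A - t • B) * A).trace.re -
      t * (projNonneg (A - t • B) * B).trace.re := by
  rw [← re_trace_projNonneg_mul, re_trace_mul_sub_smul]

lemma le_one_of_trace_eq_one {ρ : Matrix n n ℂ} (hρ : 0 ≤ ρ) (hρtr : ρ.trace = 1) : ρ ≤ 1 := by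
  have hH := hρ.posSemidef.isHermitian
  refine CFC.le_one (R := ℝ) (fun x hx => ?_) hH.isSelfAdjoint
  obtain ⟨i, rfl⟩ := hH.spectrum_real_eq_range_eigenvalues ▸ hx
  have hsum : 1 = ∑ j, hH.eigenvalues j := by
    simpa [hρtr] using congrArg Complex.re hH.trace_eq_sum_eigenvalues
  rw [hsum]
  exact Finset.single_le_sum (fun j _ => hρ.posSemidef.eigenvalues_nonneg j)
    (Finset.mem_univ i)

lemma PosDef.exists_pos_smul_one_le {σ : Matrix n n ℂ} (hσ : σ.PosDef) :
    ∃ m : ℝ, 0 < m ∧ m • (1 : Matrix n n ℂ) ≤ σ := by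
  cases subsingleton_or_nontrivial (Matrix n n ℂ)
  · exact ⟨1, one_pos, (Subsingleton.elim _ _).le⟩
  · obtain ⟨m, hm, h⟩ := (CFC.exists_pos_algebraMap_le_iff hσ.isHermitian.isSelfAdjoint).2
      fun x hx => hσ.isStrictlyPositive.spectrum_pos hx
    exact ⟨m, hm, by rwa [Algebra.algebraMap_eq_smul_one] at h⟩

lemma PosDef.exists_pos_smul_le_of_le_one {ρ σ : Matrix n n ℂ} (hσ : σ.PosDef) (hρ : ρ ≤ 1) :
    ∃ m : ℝ, 0 < m ∧ m • ρ ≤ σ := by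
  obtain ⟨m, hm, h⟩ := hσ.exists_pos_smul_one_le
  exact ⟨m, hm, le_trans (smul_le_smul_of_nonneg_left hρ hm.le) h⟩

lemma mul_re_trace_mul_le {Q ρ σ : Matrix n n ℂ} {m : ℝ} (hQ : 0 ≤ Q) (h : m • ρ ≤ σ) :
    m * (Q * ρ).trace.re ≤ (Q * σ).trace.re := by
  simpa [Matrix.mul_smul, trace_smul] using re_trace_mul_le_mul_left hQ h

end Matrix

section InformationSpectrum

variable {n : Type*} [Fintype n] [DecidableEq n] {ε : ℝ} {ρ σ : Matrix n n ℂ}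

def IsTest (ε : ℝ) (ρ Q : Matrix n n ℂ) : Prop :=
  0 ≤ Q ∧ Q ≤ 1 ∧ 1 - ε ≤ (Q * ρ).trace.re

lemma DH_eq_neg_logb_sInf (ε : ℝ) (ρ σ : Matrix n n ℂ) :
    DH ε ρ σ = -Real.logb 2 (sInf ((fun Q => (Q * σ).trace.re) '' {Q | IsTest ε ρ Q})) := by
  simp only [DH, IsTest, le_iff, sub_zero, Set.image, Set.mem_ofPred_eq, and_assoc, eq_comm]

lemma isTest_one (hρtr : ρ.trace = 1) (hε : 0 ≤ ε) : IsTest ε ρ 1 :=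
  ⟨PosSemidef.one.nonneg, le_rfl, by simp [hρtr, hε]⟩

lemma DH_le_neg_logb {Q : Matrix n n ℂ} {b : ℝ} (hQ : IsTest ε ρ Q) (hb : 0 < b)
    (h : ∀ Q, IsTest ε ρ Q → b ≤ (Q * σ).trace.re) : DH ε ρ σ ≤ -Real.logb 2 b := by
  rw [DH_eq_neg_logb_sInf]
  refine neg_le_neg (Real.logb_le_logb_of_le one_lt_two hb ?_)
  exact le_csInf ⟨_, Q, hQ, rfl⟩ (Set.forall_mem_image.mpr h)

lemma neg_logb_le_DH {Q : Matrix n n ℂ} {b : ℝ} (hQ : IsTest ε ρ Q) (hb : 0 < b)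
    (h : ∀ Q, IsTest ε ρ Q → b ≤ (Q * σ).trace.re) :
    -Real.logb 2 (Q * σ).trace.re ≤ DH ε ρ σ := by
  have hmem : (Q * σ).trace.re ∈ (fun Q => (Q * σ).trace.re) '' {Q | IsTest ε ρ Q} := ⟨Q, hQ, rfl⟩
  have hlb : b ∈ lowerBounds ((fun Q => (Q * σ).trace.re) '' {Q | IsTest ε ρ Q}) :=
    Set.forall_mem_image.mpr h
  rw [DH_eq_neg_logb_sInf]
  exact neg_le_neg (Real.logb_le_logb_of_le one_lt_two (hb.trans_le (le_csInf ⟨_, hmem⟩ hlb))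
    (csInf_le ⟨b, hlb⟩ hmem))

lemma exists_pos_le_re_trace_mul_of_isTest (hρ : ρ ≤ 1) (hσ : σ.PosDef) (hε : ε < 1) :
    ∃ b, 0 < b ∧ ∀ Q, IsTest ε ρ Q → b ≤ (Q * σ).trace.re := by
  obtain ⟨m, hm, hmσ⟩ := hσ.exists_pos_smul_le_of_le_one hρ
  refine ⟨m * (1 - ε), by nlinarith, fun Q ⟨hQ, _, hQρ⟩ => ?_⟩
  exact (mul_le_mul_of_nonneg_left hQρ hm.le).trans (mul_re_trace_mul_le hQ hmσ)

lemma isTest_projNonneg (hρ : 0 ≤ ρ) (hρtr : ρ.trace = 1) (hσ : 0 ≤ σ) {t : ℝ} (ht : 0 ≤ t)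
    (hγ : 1 - ε ≤ trPos (ρ - t • σ)) :
    IsTest ε ρ (projNonneg (ρ - t • σ)) ∧ t * (projNonneg (ρ - t • σ) * σ).trace.re ≤ ε := by
  set P := projNonneg (ρ - t • σ)
  have hPσ : 0 ≤ t * (P * σ).trace.re :=
    mul_nonneg ht (re_trace_mul_nonneg (projNonneg_nonneg _) hσ)
  have hPρ : (P * ρ).trace.re ≤ 1 := by
    simpa [hρtr] using re_trace_mul_le_mul_right hρ (projNonneg_le_one (ρ - t • σ))
  rw [trPos_sub_smul] at hγ
  exact ⟨⟨projNonneg_nonneg _, projNonneg_le_one _, by linarith⟩, by linarith⟩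

lemma nonempty_Dlow_set (hρ : ρ.IsHermitian) (hρtr : ρ.trace = 1) (hσ : σ.IsHermitian)
    (hε : 0 < ε) : {γ : ℝ | 1 - ε ≤ trPos (ρ - (2 : ℝ) ^ γ • σ)}.Nonempty := by
  set s := σ.trace.re
  set γ := Real.logb 2 (ε / (|s| + 1))
  have h2γ : (2 : ℝ) ^ γ = ε / (|s| + 1) := Real.rpow_logb two_pos (by norm_num) (by positivity)
  have hsmall : (2 : ℝ) ^ γ * s ≤ ε := by
    rw [h2γ, div_mul_eq_mul_div, div_le_iff₀ (by positivity)]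
    nlinarith [le_abs_self s, abs_nonneg s]
  refine ⟨γ, le_trans ?_ (re_trace_le_trPos (hρ.sub_real_smul hσ _))⟩
  simp only [trace_sub, trace_smul, hρtr, Complex.sub_re, Complex.one_re, Complex.smul_re,
    smul_eq_mul]
  linarith

lemma bddAbove_Dlow_set (hρ : 0 ≤ ρ) (hρ1 : ρ ≤ 1) (hσ : σ.PosDef) (hε : ε < 1) :
    BddAbove {γ : ℝ | 1 - ε ≤ trPos (ρ - (2 : ℝ) ^ γ • σ)} := by
  obtain ⟨m, hm, hmσ⟩ := hσ.exists_pos_smul_le_of_le_one hρ1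
  refine ⟨-Real.logb 2 m, fun γ hγ => ?_⟩
  set P := projNonneg (ρ - (2 : ℝ) ^ γ • σ)
  have hPρ : 0 ≤ (P * ρ).trace.re := re_trace_mul_nonneg (projNonneg_nonneg _) hρ
  have hPσ : m * (P * ρ).trace.re ≤ (P * σ).trace.re :=
    mul_re_trace_mul_le (projNonneg_nonneg _) hmσ
  have hγ' : 1 - ε ≤ (P * ρ).trace.re - (2 : ℝ) ^ γ * (P * σ).trace.re := by
    rwa [← trPos_sub_smul]
  -- otherwise `1 - ε ≤ (1 - 2^γ m) Tr(Pρ) ≤ 0`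
  have h2γm : (2 : ℝ) ^ γ * m < 1 := by
    by_contra! h
    nlinarith [Real.rpow_pos_of_pos two_pos γ]
  have hlog := Real.logb_neg one_lt_two (by positivity) h2γm
  rw [Real.logb_mul (by positivity) hm.ne', Real.logb_rpow two_pos (by norm_num)] at hlog
  linarith

lemma Dlow_le_DH (hρ : 0 ≤ ρ) (hρtr : ρ.trace = 1) (hσ : σ.PosDef) (hε₀ : 0 < ε) (hε₁ : ε < 1) :
    Dlow ε ρ σ ≤ DH ε ρ σ := by
  obtain ⟨b, hb, hbσ⟩ :=
    exists_pos_le_re_trace_mul_of_isTest (le_one_of_trace_eq_one hρ hρtr) hσ hε₁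
  refine csSup_le (nonempty_Dlow_set hρ.isSelfAdjoint hρtr hσ.isHermitian hε₀)
    fun γ hγ => ?_
  obtain ⟨hP, hPσ⟩ := isTest_projNonneg hρ hρtr hσ.posSemidef.nonneg (by positivity) hγ
  set c := (projNonneg (ρ - (2 : ℝ) ^ γ • σ) * σ).trace.re
  have hc : 0 < c := hb.trans_le (hbσ _ hP)
  have hγP : γ ≤ -Real.logb 2 c := by
    have hlog := Real.logb_nonpos one_lt_two (by positivity) (hPσ.trans hε₁.le)
    rw [Real.logb_mul (by positivity) hc.ne', Real.logb_rpow two_pos (by norm_num)] at hlog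
    linarith
  exact hγP.trans (neg_logb_le_DH hP hb hbσ)

lemma DH_sub_add_logb_le_Dlow {δ : ℝ} (hρ : 0 ≤ ρ) (hρtr : ρ.trace = 1) (hσ : σ.PosDef)
    (hδ : 0 < δ) (hδε : δ ≤ ε) (hε : ε < 1) :
    DH (ε - δ) ρ σ + Real.logb 2 δ ≤ Dlow ε ρ σ := by
  refine le_of_forall_gt_imp_ge_of_dense fun γ hγ => ?_
  have hγS : trPos (ρ - (2 : ℝ) ^ γ • σ) < 1 - ε := not_le.mp fun h =>
    (le_csSup (bddAbove_Dlow_set hρ (le_one_of_trace_eq_one hρ hρtr) hσ hε) h).not_gt hγ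
  have h2γ : 0 < (2 : ℝ) ^ γ := by positivity
  have hcost : ∀ Q, IsTest (ε - δ) ρ Q → δ / (2 : ℝ) ^ γ ≤ (Q * σ).trace.re := by
    rintro Q ⟨hQ₀, hQ₁, hQρ⟩
    have hQ := re_trace_mul_le_trPos hQ₀ hQ₁
      (hρ.posSemidef.isHermitian.sub_real_smul hσ.isHermitian ((2 : ℝ) ^ γ))
    rw [re_trace_mul_sub_smul] at hQ
    rw [div_le_iff₀ h2γ]
    linarith
  have hDH := DH_le_neg_logb (isTest_one hρtr (by linarith)) (by positivity) hcost
  rw [Real.logb_div hδ.ne' h2γ.ne', Real.logb_rpow two_pos (by norm_num)] at hDH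
  linarith

end InformationSpectrum

/-- Equivalence of `D̲_s^ε` with the hypothesis testing relative entropy:
`D_H^{ε−δ}(ρ‖σ) + log δ ≤ D̲_s^ε(ρ‖σ) ≤ D_H^ε(ρ‖σ)` for `0 < δ < ε < 1`. -/
theorem Dlow_DH_bounds {d : ℕ} (ρ σ : Matrix (Fin d) (Fin d) ℂ)
    (hρ : ρ.PosSemidef) (hρtr : ρ.trace = 1) (hσ : σ.PosDef)
    (ε δ : ℝ) (hδ0 : 0 < δ) (hδε : δ < ε) (hε1 : ε < 1) :
    DH (ε - δ) ρ σ + Real.logb 2 δ ≤ Dlow ε ρ σ ∧ Dlow ε ρ σ ≤ DH ε ρ σ :=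
  ⟨DH_sub_add_logb_le_Dlow hρ.nonneg hρtr hσ hδ0 hδε.le hε1,
    Dlow_le_DH hρ.nonneg hρtr hσ (hδ0.trans hδε) hε1⟩
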